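/- A presheaf A : Δ_inert^op → Set for which the two face maps d^⊥*, d^⊤* : A_1 → A_0 coincide is the same data as a functor L^op → Set, where L is the category of finite linear orders and convex monotone injections; more precisely, the category of such presheaves is equivalent to the category of functors L^op → Set. -/

import Mathlib

/-! Preliminaries: the active-inert factorization system on the simplex
category, the inert subcategory `Δ_inert`, the one-object category `Bℕ`,
twisted arrow categories, and the explicit free decomposition space formula,
following Hackney–Kock, "Free decomposition spaces". -/

open CategoryTheory SimplexCategory

namespace FreeDecompPaper

/-- A map in the simplex category is *active* if it preserves endpoints:
`f 0 = 0` and `f (last) = last`. -/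
def IsActive {x y : SimplexCategory} (f : x ⟶ y) : Prop :=
  f.toOrderHom 0 = 0 ∧ f.toOrderHom (Fin.last x.len) = Fin.last y.len

/-- A map in the simplex category is *inert* (distance-preserving) if
`f (i+1) = f i + 1` for all `i`. -/
def IsInert {x y : SimplexCategory} (f : x ⟶ y) : Prop :=
  ∀ i : Fin x.len, (f.toOrderHom i.succ : ℕ) = (f.toOrderHom i.castSucc : ℕ) + 1

lemma isInert_id (x : SimplexCategory) : IsInert (𝟙 x) := by intro i; simp

lemma isInert_from_zero {n : ℕ} (f : mk 0 ⟶ mk n) : IsInert f := fun i => i.elim0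

lemma isInert_comp {x y z : SimplexCategory} {f : x ⟶ y} {g : y ⟶ z}
    (hf : IsInert f) (hg : IsInert g) : IsInert (f ≫ g) := by
  intro i
  have key : ∀ a b : Fin (y.len + 1), (b : ℕ) = (a : ℕ) + 1 →
      (g.toOrderHom b : ℕ) = (g.toOrderHom a : ℕ) + 1 := by
    intro a b hab
    have ha : (a : ℕ) < y.len := by have := b.isLt; omega
    have e1 : (⟨(a : ℕ), ha⟩ : Fin y.len).castSucc = a := by ext; simp
    have e2 : (⟨(a : ℕ), ha⟩ : Fin y.len).succ = b := by ext; simp; omega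
    have := hg ⟨(a : ℕ), ha⟩
    rw [e1, e2] at this
    exact this
  simpa using key _ _ (hf i)

lemma isActive_id (x : SimplexCategory) : IsActive (𝟙 x) := by
  constructor <;> simp

lemma isActive_comp {x y z : SimplexCategory} {f : x ⟶ y} {g : y ⟶ z}
    (hf : IsActive f) (hg : IsActive g) : IsActive (f ≫ g) := by
  constructor
  · show g.toOrderHom (f.toOrderHom 0) = 0
    rw [hf.1, hg.1]
  · show g.toOrderHom (f.toOrderHom (Fin.last x.len)) = Fin.last z.len
    rw [hf.2, hg.2]

/-- The inert map `ρᵢ : [1] → [k]` with image `{i, i+1}` (0-indexed vertices;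
in the 1-indexed labelling of the paper its image is `{i-1, i}`). -/
def rho (k : ℕ) (i : Fin k) : mk 1 ⟶ mk k :=
  mkHom ⟨fun j => ⟨(i : ℕ) + (j : ℕ), by have := i.isLt; have := j.isLt; omega⟩,
    fun a b h => by
      simp only [Fin.mk_le_mk]
      have : (a : ℕ) ≤ (b : ℕ) := h
      omega⟩

/-- The vertex map `[0] → [k]` picking out the vertex `j`. -/
def vtx (k : ℕ) (j : Fin (k + 1)) : mk 0 ⟶ mk k :=
  mkHom ⟨fun _ => j, fun _ _ _ => le_refl _⟩

/-- The unique active map `[1] → [k]`. -/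
def mu (k : ℕ) : mk 1 ⟶ mk k :=
  mkHom ⟨fun j => ⟨(j : ℕ) * k, by
      have hj : (j : ℕ) ≤ 1 := by have := j.isLt; omega
      have : (j : ℕ) * k ≤ 1 * k := Nat.mul_le_mul_right k hj
      omega⟩,
    fun a b h => by
      simp only [Fin.mk_le_mk]
      exact Nat.mul_le_mul_right k h⟩

lemma isActive_mu (k : ℕ) : IsActive (mu k) := by
  constructor
  · ext
    show ((0 : Fin 2) : ℕ) * k = ((0 : Fin (k+1)) : ℕ)
    simp
  · ext
    show ((Fin.last 1 : Fin 2) : ℕ) * k = ((Fin.last k : Fin (k+1)) : ℕ)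
    simp [Fin.last]

/-- Iterated bottom coface `(d⊥)^a : [m] → [m+a]`, where `d⊥ = δ 0 : i ↦ i+1`. -/
def dBotPow (m : ℕ) : (a : ℕ) → (mk m ⟶ mk (m + a))
  | 0 => 𝟙 _
  | a + 1 => dBotPow m a ≫ δ (0 : Fin (m + a + 2))

/-- Iterated top coface `(d⊤)^b : [m] → [m+b]`, where `d⊤ = δ (last) : i ↦ i`. -/
def dTopPow (m : ℕ) : (b : ℕ) → (mk m ⟶ mk (m + b))
  | 0 => 𝟙 _
  | b + 1 => dTopPow m b ≫ δ (Fin.last (m + b + 1))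

lemma isInert_dBot (m : ℕ) : IsInert (δ (0 : Fin (m + 2)) : mk m ⟶ mk (m + 1)) := by
  intro i
  show ((0 : Fin (m+2)).succAbove i.succ : ℕ) = ((0 : Fin (m+2)).succAbove i.castSucc : ℕ) + 1
  rw [Fin.succAbove_of_le_castSucc _ _ (by simp [Fin.le_def]),
    Fin.succAbove_of_le_castSucc _ _ (by simp [Fin.le_def])]
  simp

lemma isInert_dTop (m : ℕ) : IsInert (δ (Fin.last (m + 1)) : mk m ⟶ mk (m + 1)) := by
  intro i
  show ((Fin.last (m+1)).succAbove i.succ : ℕ) = ((Fin.last (m+1)).succAbove i.castSucc : ℕ) + 1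
  have hi : (i : ℕ) < m := by have := i.isLt; simpa [SimplexCategory.len_mk] using this
  rw [Fin.succAbove_of_castSucc_lt _ _ (by
      simp only [Fin.lt_def, Fin.coe_castSucc, Fin.val_succ, Fin.val_last]; omega),
    Fin.succAbove_of_castSucc_lt _ _ (by
      simp only [Fin.lt_def, Fin.coe_castSucc, Fin.val_last]; omega)]
  simp

lemma isInert_dBotPow (m a : ℕ) : IsInert (dBotPow m a) := by
  induction a with
  | zero => exact isInert_id _
  | succ a ih => exact isInert_comp ih (isInert_dBot _)

lemma isInert_dTopPow (m b : ℕ) : IsInert (dTopPow m b) := by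
  induction b with
  | zero => exact isInert_id _
  | succ b ih => exact isInert_comp ih (isInert_dTop _)

/-- The subcategory `Δ_inert` of the simplex category: objects are natural
numbers `n` (standing for the ordinal `[n]`), and morphisms `m ⟶ n` are the
inert maps `[m] → [n]`. -/
structure InertCat where
  n : ℕ

instance : Category InertCat where
  Hom x y := {f : mk x.n ⟶ mk y.n // IsInert f}
  id x := ⟨𝟙 _, isInert_id _⟩
  comp f g := ⟨f.1 ≫ g.1, isInert_comp f.2 g.2⟩
  id_comp f := by apply Subtype.ext; simp
  comp_id f := by apply Subtype.ext; simp
  assoc f g h := by apply Subtype.ext; simp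

/-- The inclusion `j : Δ_inert → Δ`. -/
def jF : InertCat ⥤ SimplexCategory where
  obj x := mk x.n
  map f := f.1
  map_id _ := rfl
  map_comp _ _ := rfl

/-- The top vertex `[0] → [m]` as a morphism of `Δ_inert`. -/
def topV (m : ℕ) : (⟨0⟩ : InertCat) ⟶ ⟨m⟩ :=
  ⟨vtx m (Fin.last m), isInert_from_zero _⟩

/-- The bottom vertex `[0] → [m]` as a morphism of `Δ_inert`. -/
def botV (m : ℕ) : (⟨0⟩ : InertCat) ⟶ ⟨m⟩ :=
  ⟨vtx m 0, isInert_from_zero _⟩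

/-- The outer coface `d⊥ : [0] → [1]` (omitting `0`) as a morphism of `Δ_inert`. -/
def dBotI : (⟨0⟩ : InertCat) ⟶ ⟨1⟩ := ⟨δ (0 : Fin 2), isInert_from_zero _⟩

/-- The outer coface `d⊤ : [0] → [1]` (omitting the top) as a morphism of `Δ_inert`. -/
def dTopI : (⟨0⟩ : InertCat) ⟶ ⟨1⟩ := ⟨δ (1 : Fin 2), isInert_from_zero _⟩

/-- The category with objects `ℕ` and morphisms `m ⟶ n` the pairs `(a,b)`
with `a + m + b = n`, composed by componentwise addition. -/
structure NPairCat where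
  n : ℕ

instance : Category NPairCat where
  Hom x y := {p : ℕ × ℕ // p.1 + x.n + p.2 = y.n}
  id x := ⟨(0, 0), by omega⟩
  comp f g := ⟨(f.1.1 + g.1.1, f.1.2 + g.1.2), by have h1 := f.2; have h2 := g.2; omega⟩
  id_comp f := by apply Subtype.ext; obtain ⟨⟨a, b⟩, h⟩ := f; simp
  comp_id f := by apply Subtype.ext; obtain ⟨⟨a, b⟩, h⟩ := f; simp
  assoc f g h := by apply Subtype.ext; simp; omega

/-- The one-object category `Bℕ` with endomorphism monoid `(ℕ,+)`. -/
abbrev BN := SingleObj (Multiplicative ℕ)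

/-- The twisted arrow category of a category `C`: objects are arrows of `C`,
and a morphism from `f'` to `f` is a pair `(a, b)` with `f = a ≫ f' ≫ b`,
i.e. `f = b ∘ f' ∘ a`. -/
def Tw (C : Type u) [Category.{v} C] := Σ (x : C) (y : C), x ⟶ y

instance (C : Type u) [Category.{v} C] : Category (Tw C) where
  Hom f g := {p : (g.1 ⟶ f.1) × (f.2.1 ⟶ g.2.1) // g.2.2 = p.1 ≫ f.2.2 ≫ p.2}
  id f := ⟨(𝟙 _, 𝟙 _), by simp⟩
  comp u v := ⟨(v.1.1 ≫ u.1.1, u.1.2 ≫ v.1.2), by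
    have hu := u.2
    have hv := v.2
    simp only []
    simp only [hv, hu, Category.assoc]⟩
  id_comp u := by apply Subtype.ext; simp
  comp_id u := by apply Subtype.ext; simp
  assoc u v w := by apply Subtype.ext; simp

/-- Extract the pair of natural numbers underlying a morphism in `Tw Bℕ`. -/
def twBNPair {f g : Tw BN} (u : f ⟶ g) : ℕ × ℕ :=
  (Multiplicative.toAdd (show Multiplicative ℕ from u.1.1),
   Multiplicative.toAdd (show Multiplicative ℕ from u.1.2))

/-- Extract the natural number underlying an object of `Tw Bℕ`. -/
def twBNObj (f : Tw BN) : ℕ :=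
  Multiplicative.toAdd (show Multiplicative ℕ from f.2.2)

/-- The type of `k`-simplices of the free simplicial set on `A : Δ_inert^op → Set`:
the explicit formula `X_k = ∑_{α : [k] ↠ [n] active} A_n`. -/
def FD (A : InertCat ᵒᵖ ⥤ Type) (k : ℕ) : Type :=
  Σ n : ℕ, {α : mk k ⟶ mk n // IsActive α} × A.obj (Opposite.op ⟨n⟩)

/-- The action of an active map `g : [k'] → [k]` on the free simplicial set,
given by precomposition on the indexing active maps and the identity on summands. -/
def FDmap (A : InertCat ᵒᵖ ⥤ Type) {k' k : ℕ} (g : mk k' ⟶ mk k) (hg : IsActive g) :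
    FD A k → FD A k' :=
  fun x => ⟨x.1, ⟨g ≫ x.2.1.1, isActive_comp hg x.2.1.2⟩, x.2.2⟩

/-- The map of free simplicial sets induced by a natural transformation. -/
def FDmapNat {A' A : InertCat ᵒᵖ ⥤ Type} (η : A' ⟶ A) (k : ℕ) : FD A' k → FD A k :=
  fun x => ⟨x.1, x.2.1, η.app _ x.2.2⟩

/-- The tuple of successive differences of a map `α : [k] → [n]`. -/
def diff {k n : ℕ} (α : mk k ⟶ mk n) : Fin k → ℕ :=
  fun i => (α.toOrderHom i.succ : ℕ) - (α.toOrderHom i.castSucc : ℕ)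

/-- The set `Act(k)` of active maps out of `[k]` (with arbitrary codomain). -/
def ActFrom (k : ℕ) : Type :=
  Σ n : ℕ, {α : mk k ⟶ mk n // IsActive α}

/-- The difference map `Act(k) → ℕ^k`. -/
def diffMap (k : ℕ) : ActFrom k → (Fin k → ℕ) := fun x => diff x.2.1

/-- The action of `φ : [k'] → [k]` on the `k`-simplices `ℕ^k` of the nerve of
`Bℕ`: the `i`-th entry of the result is the sum of the entries from `φ(i-1)`
to `φ(i) - 1`. -/
def nerveBNAct {k' k : ℕ} (φ : mk k' ⟶ mk k) (x : Fin k → ℕ) : Fin k' → ℕ :=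
  fun i => ∑ j ∈ Finset.Ico ((φ.toOrderHom i.castSucc : ℕ)) ((φ.toOrderHom i.succ : ℕ)),
    (fun t => if h : t < k then x ⟨t, h⟩ else 0) j

/-- The inert map `γᵢ : [nᵢ] → [n]`, `j ↦ α(i) + j` (where `nᵢ = α(i+1) - α(i)`),
appearing in the active-inert factorization of `α ∘ ρᵢ`. -/
def segIncl {k n : ℕ} (α : mk k ⟶ mk n) (i : Fin k) : mk (diff α i) ⟶ mk n :=
  mkHom ⟨fun j => ⟨(α.toOrderHom i.castSucc : ℕ) + (j : ℕ), by
      have hj : (j : ℕ) ≤ diff α i := by have := j.isLt; simp [len_mk] at this; omega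
      have hle : (α.toOrderHom i.castSucc : ℕ) ≤ (α.toOrderHom i.succ : ℕ) :=
        α.toOrderHom.monotone (Fin.castSucc_le_succ i)
      have := (α.toOrderHom i.succ).isLt
      simp only [diff] at hj
      simp [len_mk] at *
      omega⟩,
    fun a b h => by
      simp only [Fin.mk_le_mk]
      have : (a : ℕ) ≤ (b : ℕ) := h
      omega⟩

lemma isInert_segIncl {k n : ℕ} (α : mk k ⟶ mk n) (i : Fin k) :
    IsInert (segIncl α i) := by
  intro t
  show ((α.toOrderHom i.castSucc : ℕ) + (t.succ : ℕ)) =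
    ((α.toOrderHom i.castSucc : ℕ) + (t.castSucc : ℕ)) + 1
  simp
  omega

/-- `γᵢ` as a morphism of `Δ_inert`. -/
def segInclI {k n : ℕ} (α : mk k ⟶ mk n) (i : Fin k) : (⟨diff α i⟩ : InertCat) ⟶ ⟨n⟩ :=
  ⟨segIncl α i, isInert_segIncl α i⟩

/-- The Segal map of the free simplicial set `X = j_!(A)`: it sends the
`α`-summand `A_n` of `X_k` to the tuple of its restrictions along the `γᵢ`. -/
def fdSegalMap (A : InertCat ᵒᵖ ⥤ Type) (k : ℕ) : FD A k → (Fin k → FD A 1) :=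
  fun x i => ⟨diff x.2.1.1 i, ⟨mu (diff x.2.1.1 i), isActive_mu _⟩,
    A.map (segInclI x.2.1.1 i).op x.2.2⟩

/-- Matching (fiber product over `X_0`) condition for a tuple in `(X_1)^k`:
consecutive components agree in `A_0` under top/bottom vertex restrictions. -/
def fdMatching (A : InertCat ᵒᵖ ⥤ Type) (k : ℕ) (t : Fin k → FD A 1) : Prop :=
  ∀ (i : Fin k) (h : (i : ℕ) + 1 < k),
    A.map (topV (t i).1).op ((t i).2.2) =
      A.map (botV (t ⟨(i : ℕ) + 1, h⟩).1).op ((t ⟨(i : ℕ) + 1, h⟩).2.2)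

/-- The restriction map `A_n → ∏ᵢ A_{nᵢ}` along the covering family `{γᵢ}`
associated to an active map `α : [k] → [n]`. -/
def resMap (A : InertCat ᵒᵖ ⥤ Type) {k n : ℕ} (α : mk k ⟶ mk n) :
    A.obj (Opposite.op ⟨n⟩) → ∀ i : Fin k, A.obj (Opposite.op ⟨diff α i⟩) :=
  fun a i => A.map (segInclI α i).op a

/-- Matching (fiber product over `A_0`) condition for a tuple in `∏ᵢ A_{nᵢ}`. -/
def resMatching (A : InertCat ᵒᵖ ⥤ Type) {k n : ℕ} (α : mk k ⟶ mk n)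
    (t : ∀ i : Fin k, A.obj (Opposite.op ⟨diff α i⟩)) : Prop :=
  ∀ (i : Fin k) (h : (i : ℕ) + 1 < k),
    A.map (topV (diff α i)).op (t i) =
      A.map (botV (diff α ⟨(i : ℕ) + 1, h⟩)).op (t ⟨(i : ℕ) + 1, h⟩)

/-- The length functor from the path category of a quiver to `Bℕ`. -/
def lengthFunctor (Q : Type u) [Quiver.{u + 1} Q] : Paths Q ⥤ BN where
  obj _ := SingleObj.star _
  map p := Multiplicative.ofAdd p.length
  map_id _ := rfl
  map_comp {x y z} p q := by
    show Multiplicative.ofAdd (p.comp q).length = _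
    show _ = (Multiplicative.ofAdd q.length) * (Multiplicative.ofAdd p.length)
    rw [← ofAdd_add]
    exact congrArg Multiplicative.ofAdd ((Quiver.Path.length_comp (V := Q) p q).trans (Nat.add_comm _ _))

/-- A functor to `Bℕ` is CULF if every factorization in `(ℕ,+)` of the image of
a morphism `f` lifts uniquely to a factorization of `f`. -/
def IsCULF {C : Type u} [Category.{v} C] (F : C ⥤ BN) : Prop :=
  ∀ {x y : C} (f : x ⟶ y) (a b : Multiplicative ℕ), F.map f = a * b →
    ∃! p : Σ z : C, (x ⟶ z) × (z ⟶ y),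
      p.2.1 ≫ p.2.2 = f ∧ F.map p.2.1 = a ∧ F.map p.2.2 = b

/-- The category `𝕃` of finite linear orders `{1,…,n}` and convex monotone
injections. -/
structure LinOrdCat where
  n : ℕ

/-- A convex monotone injection between finite linear orders. -/
def IsConvexEmb {m n : ℕ} (f : Fin m → Fin n) : Prop :=
  StrictMono f ∧ ∀ (a b : Fin m) (c : Fin n), f a ≤ c → c ≤ f b → ∃ x, f x = c

instance : Category LinOrdCat where
  Hom x y := {f : Fin x.n → Fin y.n // IsConvexEmb f}
  id x := ⟨id, strictMono_id, fun _ _ c _ _ => ⟨c, rfl⟩⟩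
  comp f g := ⟨g.1 ∘ f.1, (g.2.1).comp f.2.1, by
    intro a b c h1 h2
    obtain ⟨w, hw⟩ := g.2.2 (f.1 a) (f.1 b) c h1 h2
    have ha : f.1 a ≤ w := by
      rw [← (g.2.1).le_iff_le]; rw [hw]; exact h1
    have hb : w ≤ f.1 b := by
      rw [← (g.2.1).le_iff_le]; rw [hw]; exact h2
    obtain ⟨v, hv⟩ := f.2.2 a b w ha hb
    exact ⟨v, by simp [Function.comp, hv, hw]⟩⟩
  id_comp f := by apply Subtype.ext; rfl
  comp_id f := by apply Subtype.ext; rfl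
  assoc f g h := by apply Subtype.ext; rfl

/-!
Every inert map `[m] → [n]` is a translation `i ↦ a + i` with `a + m ≤ n`, and so is every
convex embedding `m̲ → n̲` with `m > 0`. Hence sending `[n]` to its ordered set of `n` edges is a
full functor `Δ_inert → 𝕃`, bijective on objects, which identifies two distinct parallel maps
exactly when their source is `[0]`. Presheaves on `𝕃` are therefore the presheaves on `Δ_inert` that do not
distinguish the vertices `[0] → [n]`; as the vertices `k + 1` and `k` factor as `d⊥` and `d⊤`
followed by the same edge `[1] → [n]`, this is the condition `d⊥* = d⊤*`.
-/

end FreeDecompPaper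

namespace CategoryTheory

variable {C D : Type*} [Category C] [Category D]

def HomRel.respectingFunctors (r : HomRel C) (E : Type*) [Category E] :
    ObjectProperty (C ⥤ E) :=
  fun G => ∀ ⦃X Y : C⦄ (f g : X ⟶ Y), r f g → G.map f = G.map g

namespace Quotient

variable (r : HomRel C) (E : Type*) [Category E]

def whiskeringLeftRespecting : (Quotient r ⥤ E) ⥤ (r.respectingFunctors E).FullSubcategory :=
  ObjectProperty.lift _ ((Functor.whiskeringLeft _ _ E).obj (functor r))
    fun G _ _ _ _ h => congrArg G.map (CategoryTheory.Quotient.sound r h)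

instance : (whiskeringLeftRespecting r E).EssSurj where
  mem_essImage A :=
    ⟨lift r A.obj fun _ _ _ _ h => A.property _ _ h,
      ⟨ObjectProperty.isoMk _ (lift.isLift r A.obj fun _ _ _ _ h => A.property _ _ h)⟩⟩

instance : (whiskeringLeftRespecting r E).Full :=
  Functor.Full.of_comp_faithful_iso (ObjectProperty.liftCompιIso _ _ _)

instance : (whiskeringLeftRespecting r E).Faithful :=
  Functor.Faithful.of_comp_iso (ObjectProperty.liftCompιIso _ _ _)

instance : (whiskeringLeftRespecting r E).IsEquivalence where

end Quotient

noncomputable def Functor.respectingFunctorsEquivalence (F : C ⥤ D) [F.Full] [F.EssSurj]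
    (E : Type*) [Category E] : (D ⥤ E) ≌ (F.homRel.respectingFunctors E).FullSubcategory :=
  (Quotient.lift F.homRel F fun _ _ _ _ h => h).asEquivalence.symm.congrLeft.trans
    (Quotient.whiskeringLeftRespecting F.homRel E).asEquivalence

end CategoryTheory

namespace FreeDecompPaper

namespace InertCat

def shift {m n : ℕ} (a : ℕ) (h : a + m ≤ n) : (⟨m⟩ : InertCat) ⟶ ⟨n⟩ :=
  ⟨mkHom ⟨fun i => ⟨a + i, by
      have : (i : ℕ) < m + 1 := i.isLt; show a + (i : ℕ) < n + 1; omega⟩,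
    fun i j hij => Fin.mk_le_mk.2 (Nat.add_le_add_left hij a)⟩,
    fun _ => rfl⟩

variable {x y z : InertCat}

def offset (u : x ⟶ y) : ℕ := u.1.toOrderHom 0

lemma val_apply (u : x ⟶ y) (i : Fin (x.n + 1)) :
    (u.1.toOrderHom i : ℕ) = offset u + i := by
  induction i using Fin.induction with
  | zero => simp [offset]
  | succ i ih => rw [u.2 i, ih]; simp [Fin.val_succ]; omega

lemma offset_add_le (u : x ⟶ y) : offset u + x.n ≤ y.n := by
  have h := val_apply u (Fin.last x.n)
  have := (u.1.toOrderHom (Fin.last x.n)).isLt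
  simp only [len_mk, Fin.val_last] at h this
  omega

lemma hom_ext {u v : x ⟶ y} (h : offset u = offset v) : u = v := by
  apply Subtype.ext
  ext i
  rw [val_apply u i, val_apply v i, h]

@[simp]
lemma offset_shift {m n a : ℕ} (h : a + m ≤ n) : offset (shift a h) = a := rfl

@[simp]
lemma offset_comp (u : x ⟶ y) (v : y ⟶ z) : offset (u ≫ v) = offset u + offset v :=
  (val_apply v _).trans (Nat.add_comm _ _)

@[simp]
lemma offset_dBotI : offset dBotI = 1 := rfl

@[simp]
lemma offset_dTopI : offset dTopI = 0 := rfl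

lemma map_eq_of_map_dBotI_eq_map_dTopI {A : InertCat ᵒᵖ ⥤ Type}
    (hA : A.map dBotI.op = A.map dTopI.op) (u v : (⟨0⟩ : InertCat) ⟶ y) :
    A.map u.op = A.map v.op := by
  suffices key : ∀ u : (⟨0⟩ : InertCat) ⟶ y,
      A.map u.op = A.map (shift (m := 0) 0 (by omega)).op by
    rw [key u, key v]
  intro u
  obtain ⟨k, hk⟩ : ∃ k, offset u = k := ⟨_, rfl⟩
  induction k generalizing u with
  | zero => rw [hom_ext (u := u) (v := shift 0 (by omega)) (by simpa using hk)]
  | succ k ih =>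
    have hle : k + 1 + 0 ≤ y.n := hk ▸ offset_add_le u
    have hu : u = dBotI ≫ shift k (by omega) := hom_ext (by simp [hk]; omega)
    rw [hu, op_comp, A.map_comp, hA, ← A.map_comp, ← op_comp]
    exact ih _ (by simp)

end InertCat

namespace IsConvexEmb

variable {m n : ℕ} {f : Fin m → Fin n}

lemma val_succ (hf : IsConvexEmb f) (i : ℕ) (hi : i + 1 < m) :
    (f ⟨i + 1, hi⟩ : ℕ) = f ⟨i, by omega⟩ + 1 := by
  set p : Fin m := ⟨i, by omega⟩
  set q : Fin m := ⟨i + 1, hi⟩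
  have hpq : f p < f q := hf.1 (Fin.mk_lt_mk.2 (by omega))
  obtain ⟨x, hx⟩ := hf.2 p q ⟨f p + 1, by omega⟩ (Fin.le_def.2 (by simp)) (Fin.le_def.2 hpq)
  have hpx : i < (x : ℕ) :=
    Fin.lt_def.1 (hf.1.lt_iff_lt.1 (hx ▸ Fin.lt_def.2 (by simp)) : p < x)
  have hxq : (x : ℕ) ≤ i + 1 := Fin.le_def.1 (hf.1.le_iff_le.1 (hx ▸ Fin.le_def.2 hpq) : x ≤ q)
  obtain rfl : x = q := Fin.ext (by simp only [q]; omega)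
  simp [hx]

lemma val_apply (hf : IsConvexEmb f) (h0 : 0 < m) (j : Fin m) :
    (f j : ℕ) = f ⟨0, h0⟩ + j := by
  obtain ⟨j, hj⟩ := j
  induction j with
  | zero => simp
  | succ j ih => rw [hf.val_succ j hj, ih]; rfl

lemma val_add_le (hf : IsConvexEmb f) (h0 : 0 < m) : (f ⟨0, h0⟩ : ℕ) + m ≤ n := by
  have hlast := hf.val_apply h0 ⟨m - 1, by omega⟩
  have := (f ⟨m - 1, by omega⟩).isLt
  simp only at hlast
  omega

end IsConvexEmb

namespace LinOrdCat

def shift {m n : ℕ} (a : ℕ) (h : a + m ≤ n) : (⟨m⟩ : LinOrdCat) ⟶ ⟨n⟩ :=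
  ⟨fun j => ⟨a + j, by have : (j : ℕ) < m := j.isLt; show a + (j : ℕ) < n; omega⟩,
    fun _ _ hij => Fin.mk_lt_mk.2 (Nat.add_lt_add_left hij a),
    fun _ j c (hi : a + _ ≤ (c : ℕ)) (hj : (c : ℕ) ≤ a + j) =>
      ⟨⟨c - a, by have : (j : ℕ) < m := j.isLt; omega⟩,
        Fin.ext (show a + (c - a) = (c : ℕ) by omega)⟩⟩

lemma eq_shift {m n : ℕ} (f : (⟨m⟩ : LinOrdCat) ⟶ ⟨n⟩) (h0 : 0 < m) :
    f = shift (f.1 ⟨0, h0⟩) (f.2.val_add_le h0) :=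
  Subtype.ext (funext fun j => Fin.ext (f.2.val_apply h0 j))

lemma hom_ext_of_n_eq_zero {x y : LinOrdCat} (hx : x.n = 0) (f g : x ⟶ y) : f = g :=
  Subtype.ext (funext fun j => absurd j.isLt (by omega))

end LinOrdCat

open InertCat in
def edges : InertCat ⥤ LinOrdCat where
  obj x := ⟨x.n⟩
  map u := LinOrdCat.shift (offset u) (offset_add_le u)
  map_id _ := Subtype.ext (funext fun _ => Fin.ext (Nat.zero_add _))
  map_comp u v := Subtype.ext (funext fun j => Fin.ext
    (show offset (u ≫ v) + (j : ℕ) = offset v + (offset u + j) by rw [offset_comp]; omega))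

instance : edges.Full where
  map_surjective {x y} f := by
    by_cases h0 : 0 < x.n
    · exact ⟨InertCat.shift _ (f.2.val_add_le h0), (LinOrdCat.eq_shift f h0).symm⟩
    · obtain ⟨n⟩ := x
      obtain rfl : n = 0 := by simp at h0; omega
      exact ⟨InertCat.shift 0 (by omega), LinOrdCat.hom_ext_of_n_eq_zero rfl _ _⟩

instance : edges.EssSurj where
  mem_essImage y := ⟨⟨y.n⟩, ⟨Iso.refl _⟩⟩

lemma edges_map_injective {x y : InertCat} (h0 : 0 < x.n) :
    Function.Injective (edges.map : (x ⟶ y) → _) := fun _ _ h =>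
  InertCat.hom_ext (congrArg (fun f => (f.1 ⟨0, h0⟩ : ℕ)) h)

lemma respectingFunctors_edges_iff (A : InertCat ᵒᵖ ⥤ Type) :
    edges.op.homRel.respectingFunctors Type A ↔ A.map dBotI.op = A.map dTopI.op := by
  refine ⟨fun hA => hA _ _ (congrArg Quiver.Hom.op (LinOrdCat.hom_ext_of_n_eq_zero rfl _ _)),
    fun hA X Y f g h => ?_⟩
  obtain ⟨⟨n⟩⟩ := Y
  rcases Nat.eq_zero_or_pos n with rfl | h0
  · exact InertCat.map_eq_of_map_dBotI_eq_map_dTopI hA f.unop g.unop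
  · exact congrArg A.map (Quiver.Hom.unop_inj (edges_map_injective h0 (Quiver.Hom.op_inj h)))

/-- Presheaves on `Δ_inert` whose two face maps `A_1 → A_0`
coincide are the same thing as restriction `𝕃`-species, i.e. presheaves on the
category `𝕃` of finite linear orders and convex monotone injections. -/
theorem restriction_L_species_equiv :
    Nonempty
      (ObjectProperty.FullSubcategory
        (fun A : InertCat ᵒᵖ ⥤ Type => A.map dBotI.op = A.map dTopI.op) ≌
        (LinOrdCat ᵒᵖ ⥤ Type)) := by
  have hP : (fun A : InertCat ᵒᵖ ⥤ Type => A.map dBotI.op = A.map dTopI.op) =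
      edges.op.homRel.respectingFunctors Type :=
    funext fun A => propext (respectingFunctors_edges_iff A).symm
  rw [hP]
  exact ⟨(edges.op.respectingFunctorsEquivalence Type).symm⟩

end FreeDecompPaper
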